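/- (Theorem 3, sufficiency.) Let Z be a countable observation alphabet and, for each m ≥ 1, let H_m be a countable hypothesis alphabet and Q_m a learning kernel assigning to each S ∈ Z^m a pmf on H_m. Suppose the learning capacities satisfy C^(m) → 0 as m → ∞. Then the learning machine generalizes: for every probability mass function P on Z and every sequence of loss functions L_m : H_m × Z → [0,1], the true and empirical risks at sample size m satisfy |R_m − R_emp,m| → 0 as m → ∞. -/
import Mathlib
set_option maxHeartbeats 1000000


/-- Total variation distance between two pmfs: `1 - ∑ min`. -/
noncomputable def tv {A : Type*} (p q : A → ℝ) : ℝ := 1 - ∑' a, min (p a) (q a)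

/-- `p` is a probability mass function: nonnegative and summing to `1`. -/
def IsPMF {A : Type*} (p : A → ℝ) : Prop := (∀ a, 0 ≤ p a) ∧ HasSum p 1

/-- Product pmf `P^{⊗m}` of `m` i.i.d. draws from `P`. -/
noncomputable def prodPMF {Z : Type*} (m : ℕ) (P : Z → ℝ) (S : Fin m → Z) : ℝ :=
  ∏ i, P (S i)

/-- Joint pmf of a uniformly drawn training example `Z_trn` and the inferred
hypothesis `H`: `μ(z,h) = ∑_S P^{⊗m}(S) · (1/m)∑_i 1{S_i = z} · Q(h|S)`. -/
noncomputable def jointZH {Z H : Type*} (m : ℕ) (P : Z → ℝ)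
    (Q : (Fin m → Z) → H → ℝ) (z : Z) (h : H) : ℝ :=
  haveI := Classical.decEq Z
  ∑' S : Fin m → Z,
    prodPMF m P S * ((1 / (m : ℝ)) * ∑ i, if S i = z then (1 : ℝ) else 0) * Q S h

/-- Marginal of `Z_trn` under the joint pmf `jointZH`. -/
noncomputable def margZ {Z H : Type*} (m : ℕ) (P : Z → ℝ)
    (Q : (Fin m → Z) → H → ℝ) (z : Z) : ℝ :=
  ∑' h : H, jointZH m P Q z h

/-- Marginal of the hypothesis `H` under the joint pmf `jointZH`. -/
noncomputable def margH {Z H : Type*} (m : ℕ) (P : Z → ℝ)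
    (Q : (Fin m → Z) → H → ℝ) (h : H) : ℝ :=
  ∑' z : Z, jointZH m P Q z h

/-- Mutual affinity `I(Z_trn, H) = ‖μ_Z ⊗ μ_H, μ‖`. -/
noncomputable def affinity {Z H : Type*} (m : ℕ) (P : Z → ℝ)
    (Q : (Fin m → Z) → H → ℝ) : ℝ :=
  tv (fun p : Z × H => margZ m P Q p.1 * margH m P Q p.2)
    (fun p : Z × H => jointZH m P Q p.1 p.2)

/-- True risk `R(𝓛) = ∑_S P^{⊗m}(S) ∑_h Q(h|S) ∑_z P(z)·L(h,z)`. -/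
noncomputable def trueRisk {Z H : Type*} (m : ℕ) (P : Z → ℝ)
    (Q : (Fin m → Z) → H → ℝ) (L : H → Z → ℝ) : ℝ :=
  ∑' S : Fin m → Z, prodPMF m P S * ∑' h : H, Q S h * ∑' z : Z, P z * L h z

/-- Empirical risk `R_emp(𝓛) = ∑_S P^{⊗m}(S) ∑_h Q(h|S)·(1/m)∑_i L(h,S_i)`. -/
noncomputable def empRisk {Z H : Type*} (m : ℕ) (P : Z → ℝ)
    (Q : (Fin m → Z) → H → ℝ) (L : H → Z → ℝ) : ℝ :=
  ∑' S : Fin m → Z, prodPMF m P S * ∑' h : H, Q S h * ((1 / (m : ℝ)) * ∑ i, L h (S i))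

/-- Learning capacity `C^(m)(𝓛) = sup_P I(Z_trn, H)`. -/
noncomputable def capacity {Z H : Type*} (m : ℕ)
    (Q : (Fin m → Z) → H → ℝ) : ℝ :=
  sSup {c : ℝ | ∃ P : Z → ℝ, IsPMF P ∧ c = affinity m P Q}

section Helpers

variable {Z H : Type*}

lemma isPMF_le_one {A : Type*} {p : A → ℝ} (hp : IsPMF p) (a : A) : p a ≤ 1 :=
  le_hasSum hp.2 a fun j _ => hp.1 j

lemma prodPMF_nonneg {P : Z → ℝ} (hP : ∀ z, 0 ≤ P z) (m : ℕ)
    (S : Fin m → Z) : 0 ≤ prodPMF m P S :=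
  Finset.prod_nonneg fun i _ => hP (S i)

lemma hasSum_prodPMF {P : Z → ℝ} (hP : IsPMF P) :
    ∀ k, HasSum (prodPMF k P) (1 : ℝ)
  | 0 => by
      have h : ∀ S : Fin 0 → Z, prodPMF 0 P S = 1 := by
        intro S; simp [prodPMF]
      have := hasSum_single (f := prodPMF 0 P) (Fin.elim0 : Fin 0 → Z)
        (fun b' hb' => absurd (Subsingleton.elim _ _) hb')
      simpa [h] using this
  | (k+1) => by
      have ih := hasSum_prodPMF hP k
      have hsumm : Summable (fun x : Z × (Fin k → Z) => P x.1 * prodPMF k P x.2) :=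
        hP.2.summable.mul_of_nonneg ih.summable hP.1 (prodPMF_nonneg hP.1 k)
      have hmul : HasSum (fun x : Z × (Fin k → Z) => P x.1 * prodPMF k P x.2) 1 := by
        simpa using hP.2.mul ih hsumm
      have he : (prodPMF (k+1) P) ∘ (Fin.consEquiv fun _ : Fin (k+1) => Z) =
          fun x : Z × (Fin k → Z) => P x.1 * prodPMF k P x.2 := by
        funext x
        simp [prodPMF, Fin.prod_univ_succ, Fin.consEquiv]
      exact ((Fin.consEquiv fun _ : Fin (k+1) => Z).hasSum_iff).mp (by rw [he]; exact hmul)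

lemma abs_tsum_sub_le_tv {A : Type*} {p q f : A → ℝ} (hp : IsPMF p) (hq : IsPMF q)
    (hf0 : ∀ a, 0 ≤ f a) (hf1 : ∀ a, f a ≤ 1) :
    |(∑' a, p a * f a) - ∑' a, q a * f a| ≤ tv p q := by
  have key : ∀ p q : A → ℝ, IsPMF p → IsPMF q →
      (∑' a, p a * f a) - (∑' a, q a * f a) ≤ tv p q := by
    intro p q hp hq
    have hr0 : ∀ a, 0 ≤ min (p a) (q a) := fun a => le_min (hp.1 a) (hq.1 a)
    have hrs : Summable (fun a => min (p a) (q a)) :=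
      Summable.of_nonneg_of_le hr0 (fun a => min_le_left _ _) hp.2.summable
    have hpf : Summable (fun a => p a * f a) :=
      Summable.of_nonneg_of_le (fun a => mul_nonneg (hp.1 a) (hf0 a))
        (fun a => mul_le_of_le_one_right (hp.1 a) (hf1 a)) hp.2.summable
    have hqf : Summable (fun a => q a * f a) :=
      Summable.of_nonneg_of_le (fun a => mul_nonneg (hq.1 a) (hf0 a))
        (fun a => mul_le_of_le_one_right (hq.1 a) (hf1 a)) hq.2.summable
    have hrf : Summable (fun a => min (p a) (q a) * f a) :=
      Summable.of_nonneg_of_le (fun a => mul_nonneg (hr0 a) (hf0 a))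
        (fun a => mul_le_of_le_one_right (hr0 a) (hf1 a)) hrs
    have step1 : (∑' a, q a * f a) ≥ ∑' a, min (p a) (q a) * f a :=
      Summable.tsum_le_tsum (fun a => mul_le_mul_of_nonneg_right (min_le_right _ _) (hf0 a)) hrf hqf
    have step2 : (∑' a, p a * f a) - (∑' a, min (p a) (q a) * f a)
        ≤ ∑' a, (p a - min (p a) (q a)) := by
      rw [← Summable.tsum_sub hpf hrf]
      refine Summable.tsum_le_tsum (fun a => ?_) (hpf.sub hrf) (hp.2.summable.sub hrs)
      have h1 : min (p a) (q a) ≤ p a := min_le_left _ _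
      nlinarith [hf0 a, hf1 a, hr0 a]
    have step3 : (∑' a, (p a - min (p a) (q a))) = tv p q := by
      rw [Summable.tsum_sub hp.2.summable hrs, hp.2.tsum_eq, tv]
    linarith
  have htv : tv p q = tv q p := by
    unfold tv
    congr 1
    exact tsum_congr fun a => min_comm _ _
  rw [abs_sub_le_iff]
  exact ⟨key p q hp hq, htv ▸ key q p hq hp⟩

lemma hasSum_prod_ite [DecidableEq Z] {P : Z → ℝ} (hP : IsPMF P) {n : ℕ}
    (i : Fin (n+1)) (z : Z) :
    HasSum (fun S : Fin (n+1) → Z => prodPMF (n+1) P S * (if S i = z then (1:ℝ) else 0))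
      (P z) := by
  have h1 : HasSum (fun x : Z => P x * (if x = z then (1:ℝ) else 0)) (P z) := by
    have hfun : (fun x : Z => P x * (if x = z then (1:ℝ) else 0))
        = fun x => if x = z then P z else 0 := by
      funext x; by_cases h : x = z <;> simp [h]
    rw [hfun]; exact hasSum_ite_eq z (P z)
  have h2 := hasSum_prodPMF hP n
  have hs : Summable (fun x : Z × (Fin n → Z) =>
      (P x.1 * (if x.1 = z then (1:ℝ) else 0)) * prodPMF n P x.2) :=
    Summable.mul_of_nonneg h1.summable h2.summable
      (fun x => mul_nonneg (hP.1 x) (by positivity)) (prodPMF_nonneg hP.1 n)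
  have hmul : HasSum (fun x : Z × (Fin n → Z) =>
      (P x.1 * (if x.1 = z then (1:ℝ) else 0)) * prodPMF n P x.2) (P z) := by
    simpa using h1.mul h2 hs
  have base : HasSum (fun S : Fin (n+1) → Z =>
      prodPMF (n+1) P S * (if S 0 = z then (1:ℝ) else 0)) (P z) := by
    refine ((Fin.consEquiv fun _ : Fin (n+1) => Z).hasSum_iff).mp ?_
    have he : (fun S : Fin (n+1) → Z => prodPMF (n+1) P S * (if S 0 = z then (1:ℝ) else 0))
        ∘ (Fin.consEquiv fun _ : Fin (n+1) => Z)
        = fun x : Z × (Fin n → Z) =>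
          (P x.1 * (if x.1 = z then (1:ℝ) else 0)) * prodPMF n P x.2 := by
      funext x
      simp only [Function.comp_apply, Fin.consEquiv_apply, prodPMF, Fin.prod_univ_succ,
        Fin.cons_zero, Fin.cons_succ]
      ring
    rw [he]; exact hmul
  set e : (Fin (n+1) → Z) ≃ (Fin (n+1) → Z) :=
    Equiv.arrowCongr (Equiv.swap 0 i) (Equiv.refl Z) with hedef
  refine (e.hasSum_iff).mp ?_
  have he : (fun S : Fin (n+1) → Z => prodPMF (n+1) P S * (if S i = z then (1:ℝ) else 0)) ∘ e
      = fun S : Fin (n+1) → Z => prodPMF (n+1) P S * (if S 0 = z then (1:ℝ) else 0) := by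
    funext S
    have heS : e S = fun j => S (Equiv.swap 0 i j) := by
      funext j
      simp [hedef, Equiv.arrowCongr]
    have hip : prodPMF (n+1) P (e S) = prodPMF (n+1) P S := by
      rw [heS]
      simpa [prodPMF] using Equiv.prod_comp (Equiv.swap 0 i) fun j => P (S j)
    have hiv : e S i = S 0 := by rw [heS]; simp
    simp only [Function.comp_apply, hip, hiv]
  rw [he]; exact base

end Helpers
section Main

variable {Z H : Type*}

/-- The empirical frequency weight `(1/m)·∑_i 1{S_i = z}`. -/
noncomputable def fracZ (n : ℕ) (S : Fin (n+1) → Z) (z : Z) : ℝ :=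
  haveI := Classical.decEq Z
  (1 / ((n+1 : ℕ) : ℝ)) * ∑ i, if S i = z then (1:ℝ) else 0

/-- The summand of the joint pmf. -/
noncomputable def Fm (n : ℕ) (P : Z → ℝ) (Q : (Fin (n+1) → Z) → H → ℝ)
    (S : Fin (n+1) → Z) (z : Z) (h : H) : ℝ :=
  prodPMF (n+1) P S * fracZ n S z * Q S h

lemma jointZH_eq (n : ℕ) (P : Z → ℝ) (Q : (Fin (n+1) → Z) → H → ℝ) (z : Z) (h : H) :
    jointZH (n+1) P Q z h = ∑' S, Fm n P Q S z h := rfl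

variable {n : ℕ} {P : Z → ℝ} {Q : (Fin (n+1) → Z) → H → ℝ}

lemma natcast_ne (n : ℕ) : ((n+1 : ℕ) : ℝ) ≠ 0 := by positivity

lemma fracZ_nonneg (S : Fin (n+1) → Z) (z : Z) : 0 ≤ fracZ n S z := by
  letI := Classical.decEq Z
  unfold fracZ
  apply mul_nonneg (by positivity)
  exact Finset.sum_nonneg fun i _ => by split <;> norm_num

lemma fracZ_le_one (S : Fin (n+1) → Z) (z : Z) : fracZ n S z ≤ 1 := by
  letI := Classical.decEq Z
  unfold fracZ
  have hb : (∑ i, if S i = z then (1:ℝ) else 0) ≤ ((n+1 : ℕ) : ℝ) := by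
    calc (∑ i, if S i = z then (1:ℝ) else 0) ≤ ∑ _i : Fin (n+1), (1:ℝ) :=
          Finset.sum_le_sum fun i _ => by split <;> norm_num
      _ = ((n+1 : ℕ) : ℝ) := by simp
  have h2 := mul_le_mul_of_nonneg_left hb
    (by positivity : (0:ℝ) ≤ 1 / ((n+1 : ℕ) : ℝ))
  calc (1 / ((n+1 : ℕ) : ℝ)) * ∑ i, (if S i = z then (1:ℝ) else 0)
      ≤ (1 / ((n+1 : ℕ) : ℝ)) * ((n+1 : ℕ) : ℝ) := h2
    _ = 1 := by field_simp

lemma hasSum_fracZ (S : Fin (n+1) → Z) : HasSum (fun z => fracZ n S z) 1 := by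
  letI := Classical.decEq Z
  unfold fracZ
  have h1 : ∀ i : Fin (n+1), HasSum (fun z : Z => if S i = z then (1:ℝ) else 0) 1 := by
    intro i
    have hfun : (fun z : Z => if S i = z then (1:ℝ) else 0)
        = fun z => if z = S i then (1:ℝ) else 0 := by
      funext z; by_cases h : z = S i
      · subst h; simp
      · simp only [if_neg h, if_neg (fun hh : S i = z => h hh.symm)]
    rw [hfun]; exact hasSum_ite_eq (S i) 1
  have h2 : HasSum (fun z : Z => ∑ i : Fin (n+1), if S i = z then (1:ℝ) else 0)
      ((n+1 : ℕ) : ℝ) := by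
    have := hasSum_sum (s := (Finset.univ : Finset (Fin (n+1))))
      (f := fun i (z : Z) => if S i = z then (1:ℝ) else 0) (a := fun _ => 1)
      (fun i _ => h1 i)
    simpa using this
  have h3 := h2.mul_left (1 / ((n+1 : ℕ) : ℝ))
  have hc : (1 / ((n+1 : ℕ) : ℝ)) * ((n+1 : ℕ) : ℝ) = 1 := by field_simp
  rw [hc] at h3
  exact h3

lemma Fm_nonneg (hP0 : ∀ z, 0 ≤ P z) (hQ0 : ∀ S h, 0 ≤ Q S h)
    (S : Fin (n+1) → Z) (z : Z) (h : H) : 0 ≤ Fm n P Q S z h :=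
  mul_nonneg (mul_nonneg (prodPMF_nonneg hP0 _ S) (fracZ_nonneg S z)) (hQ0 S h)

lemma Fm_le_mul (hP0 : ∀ z, 0 ≤ P z) (hQ0 : ∀ S h, 0 ≤ Q S h)
    (S : Fin (n+1) → Z) (z : Z) (h : H) :
    Fm n P Q S z h ≤ prodPMF (n+1) P S * Q S h := by
  have := mul_le_mul_of_nonneg_right
    (mul_le_of_le_one_right (prodPMF_nonneg hP0 _ S) (fracZ_le_one S z)) (hQ0 S h)
  exact this

lemma Fm_le (hP0 : ∀ z, 0 ≤ P z) (hQ : ∀ S, IsPMF (Q S))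
    (S : Fin (n+1) → Z) (z : Z) (h : H) : Fm n P Q S z h ≤ prodPMF (n+1) P S :=
  (Fm_le_mul hP0 (fun S h => (hQ S).1 h) S z h).trans
    (mul_le_of_le_one_right (prodPMF_nonneg hP0 _ S) (isPMF_le_one (hQ S) h))

lemma hasSum_Fm_z (S : Fin (n+1) → Z) (h : H) :
    HasSum (fun z => Fm n P Q S z h) (prodPMF (n+1) P S * Q S h) := by
  have h1 := (hasSum_fracZ (n := n) S).mul_left (prodPMF (n+1) P S * Q S h)
  rw [mul_one] at h1
  have hfun : (fun z => prodPMF (n+1) P S * Q S h * fracZ n S z)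
      = fun z => Fm n P Q S z h := by
    funext z; unfold Fm; ring
  rw [hfun] at h1; exact h1

lemma hasSum_Fm_h (hQ : ∀ S, IsPMF (Q S)) (S : Fin (n+1) → Z) (z : Z) :
    HasSum (fun h => Fm n P Q S z h) (prodPMF (n+1) P S * fracZ n S z) := by
  have h1 := (hQ S).2.mul_left (prodPMF (n+1) P S * fracZ n S z)
  rw [mul_one] at h1
  exact h1

lemma hasSum_margF (hP : IsPMF P) (z : Z) :
    HasSum (fun S : Fin (n+1) → Z => prodPMF (n+1) P S * fracZ n S z) (P z) := by
  letI := Classical.decEq Z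
  have h1 : HasSum (fun S : Fin (n+1) → Z =>
      ∑ i, prodPMF (n+1) P S * (if S i = z then (1:ℝ) else 0)) (((n+1 : ℕ) : ℝ) * P z) := by
    have := hasSum_sum (s := (Finset.univ : Finset (Fin (n+1))))
      (f := fun (i : Fin (n+1)) (S : Fin (n+1) → Z) =>
        prodPMF (n+1) P S * (if S i = z then (1:ℝ) else 0))
      (a := fun _ => P z) (fun i _ => hasSum_prod_ite hP i z)
    simpa [Finset.sum_const, nsmul_eq_mul] using this
  have h2 := h1.mul_left (1 / ((n+1 : ℕ) : ℝ))
  have hc : (1 / ((n+1 : ℕ) : ℝ)) * (((n+1 : ℕ) : ℝ) * P z) = P z := by field_simp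
  rw [hc] at h2
  have hfun : (fun S : Fin (n+1) → Z =>
      (1 / ((n+1 : ℕ) : ℝ)) * ∑ i, prodPMF (n+1) P S * (if S i = z then (1:ℝ) else 0))
      = fun S => prodPMF (n+1) P S * fracZ n S z := by
    funext S
    unfold fracZ
    rw [← Finset.mul_sum]
    ring
  rw [hfun] at h2; exact h2

lemma summable_Fm_prod (hP : IsPMF P) (hQ : ∀ S, IsPMF (Q S)) (S : Fin (n+1) → Z) :
    Summable (fun zh : Z × H => Fm n P Q S zh.1 zh.2) := by
  rw [summable_prod_of_nonneg (fun zh => Fm_nonneg hP.1 (fun S h => (hQ S).1 h) S zh.1 zh.2)]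
  constructor
  · exact fun z => (hasSum_Fm_h hQ S z).summable
  · have hfun : (fun z => ∑' h, Fm n P Q S z h)
        = fun z => prodPMF (n+1) P S * fracZ n S z :=
      funext fun z => (hasSum_Fm_h hQ S z).tsum_eq
    rw [hfun]
    exact ((hasSum_fracZ S).mul_left (prodPMF (n+1) P S)).summable

lemma tsum_Fm_prod (hP : IsPMF P) (hQ : ∀ S, IsPMF (Q S)) (S : Fin (n+1) → Z) :
    ∑' zh : Z × H, Fm n P Q S zh.1 zh.2 = prodPMF (n+1) P S := by
  rw [Summable.tsum_prod' (summable_Fm_prod hP hQ S) (fun z => (hasSum_Fm_h hQ S z).summable)]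
  have hfun : (fun z => ∑' h, Fm n P Q S z h)
      = fun z => prodPMF (n+1) P S * fracZ n S z :=
    funext fun z => (hasSum_Fm_h hQ S z).tsum_eq
  rw [hfun, ((hasSum_fracZ S).mul_left (prodPMF (n+1) P S)).tsum_eq, mul_one]

lemma master (hP : IsPMF P) (hQ : ∀ S, IsPMF (Q S)) {L : H → Z → ℝ}
    (hL0 : ∀ h z, 0 ≤ L h z) (hL1 : ∀ h z, L h z ≤ 1) :
    (∑' zh : Z × H, jointZH (n+1) P Q zh.1 zh.2 * L zh.2 zh.1)
      = ∑' S : Fin (n+1) → Z, prodPMF (n+1) P S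
          * ∑' h : H, Q S h * ((1 / ((n+1 : ℕ) : ℝ)) * ∑ i, L h (S i)) := by
  letI := Classical.decEq Z
  have hQ0 : ∀ S h, 0 ≤ Q S h := fun S h => (hQ S).1 h
  have hF0 : ∀ S (zh : Z × H), 0 ≤ Fm n P Q S zh.1 zh.2 :=
    fun S zh => Fm_nonneg hP.1 hQ0 S zh.1 zh.2
  have hΦ0 : ∀ S (zh : Z × H), 0 ≤ Fm n P Q S zh.1 zh.2 * L zh.2 zh.1 :=
    fun S zh => mul_nonneg (hF0 S zh) (hL0 _ _)
  have hΦfiber : ∀ S, Summable (fun zh : Z × H => Fm n P Q S zh.1 zh.2 * L zh.2 zh.1) :=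
    fun S => Summable.of_nonneg_of_le (hΦ0 S)
      (fun zh => mul_le_of_le_one_right (hF0 S zh) (hL1 _ _)) (summable_Fm_prod hP hQ S)
  have hΦsums_le : ∀ S, (∑' zh : Z × H, Fm n P Q S zh.1 zh.2 * L zh.2 zh.1)
      ≤ prodPMF (n+1) P S := by
    intro S
    have := Summable.tsum_le_tsum (fun zh : Z × H => mul_le_of_le_one_right (hF0 S zh) (hL1 _ _))
      (hΦfiber S) (summable_Fm_prod hP hQ S)
    rwa [tsum_Fm_prod hP hQ S] at this
  have hΦ : Summable (Function.uncurry fun (S : Fin (n+1) → Z) (zh : Z × H) =>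
      Fm n P Q S zh.1 zh.2 * L zh.2 zh.1) :=
    (summable_prod_of_nonneg (fun x => hΦ0 x.1 x.2)).2
      ⟨hΦfiber, Summable.of_nonneg_of_le (fun S => tsum_nonneg (hΦ0 S))
        hΦsums_le (hasSum_prodPMF hP (n+1)).summable⟩
  have hΦcol : ∀ zh : Z × H, Summable (fun S => Fm n P Q S zh.1 zh.2 * L zh.2 zh.1) :=
    fun zh => Summable.of_nonneg_of_le (fun S => hΦ0 S zh)
      (fun S => (mul_le_of_le_one_right (hF0 S zh) (hL1 _ _)).trans
        (Fm_le hP.1 hQ S zh.1 zh.2)) (hasSum_prodPMF hP (n+1)).summable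
  have e1 : ∀ zh : Z × H, jointZH (n+1) P Q zh.1 zh.2 * L zh.2 zh.1
      = ∑' S, Fm n P Q S zh.1 zh.2 * L zh.2 zh.1 := by
    intro zh; rw [jointZH_eq, tsum_mul_right]
  have e2 : ∀ S : Fin (n+1) → Z, (∑' zh : Z × H, Fm n P Q S zh.1 zh.2 * L zh.2 zh.1)
      = prodPMF (n+1) P S * ∑' h : H, Q S h * ((1 / ((n+1 : ℕ) : ℝ)) * ∑ i, L h (S i)) := by
    intro S
    have hz_summ : ∀ z, Summable (fun h => Fm n P Q S z h * L h z) :=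
      fun z => Summable.of_nonneg_of_le (fun h => hΦ0 S (z, h))
        (fun h => mul_le_of_le_one_right (hF0 S (z, h)) (hL1 _ _))
        (hasSum_Fm_h hQ S z).summable
    have hh_summ : ∀ h, Summable (fun z => Fm n P Q S z h * L h z) :=
      fun h => Summable.of_nonneg_of_le (fun z => hΦ0 S (z, h))
        (fun z => mul_le_of_le_one_right (hF0 S (z, h)) (hL1 _ _))
        (hasSum_Fm_z S h).summable
    have hΦfiberU : Summable (Function.uncurry fun (z : Z) (h : H) =>
        Fm n P Q S z h * L h z) := hΦfiber S
    have e3 : ∀ h, (∑' z, Fm n P Q S z h * L h z)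
        = prodPMF (n+1) P S * (Q S h * ((1 / ((n+1 : ℕ) : ℝ)) * ∑ i, L h (S i))) := by
      intro h
      have hfun : ∀ i : Fin (n+1), (fun z => (if S i = z then (1:ℝ) else 0) * L h z)
          = fun z => if z = S i then L h (S i) else 0 := by
        intro i; funext z; by_cases hz : z = S i
        · subst hz; simp
        · simp only [if_neg hz, if_neg (fun hh : S i = z => hz hh.symm), zero_mul]
      have hrew : (fun z => Fm n P Q S z h * L h z) = fun z =>
          (prodPMF (n+1) P S * Q S h * (1 / ((n+1 : ℕ) : ℝ)))
            * ∑ i, (if S i = z then (1:ℝ) else 0) * L h z := by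
        funext z; unfold Fm fracZ; rw [← Finset.sum_mul]; ring
      have e4 : (∑' z, ∑ i, (if S i = z then (1:ℝ) else 0) * L h z) = ∑ i, L h (S i) := by
        rw [Summable.tsum_finsetSum (fun i _ => by
          rw [hfun i]; exact (hasSum_ite_eq (S i) (L h (S i))).summable)]
        refine Finset.sum_congr rfl fun i _ => ?_
        rw [hfun i]
        exact (hasSum_ite_eq (S i) (L h (S i))).tsum_eq
      rw [hrew, tsum_mul_left, e4]; ring
    calc (∑' zh : Z × H, Fm n P Q S zh.1 zh.2 * L zh.2 zh.1)
        = ∑' (z : Z) (h : H), Fm n P Q S z h * L h z := Summable.tsum_prod' (hΦfiber S) hz_summ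
      _ = ∑' (h : H) (z : Z), Fm n P Q S z h * L h z :=
          (Summable.tsum_comm' hΦfiberU hz_summ hh_summ).symm
      _ = ∑' h : H, prodPMF (n+1) P S
            * (Q S h * ((1 / ((n+1 : ℕ) : ℝ)) * ∑ i, L h (S i))) := tsum_congr e3
      _ = prodPMF (n+1) P S
            * ∑' h : H, Q S h * ((1 / ((n+1 : ℕ) : ℝ)) * ∑ i, L h (S i)) := tsum_mul_left
  calc (∑' zh : Z × H, jointZH (n+1) P Q zh.1 zh.2 * L zh.2 zh.1)
      = ∑' (zh : Z × H) (S : Fin (n+1) → Z), Fm n P Q S zh.1 zh.2 * L zh.2 zh.1 :=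
        tsum_congr e1
    _ = ∑' (S : Fin (n+1) → Z) (zh : Z × H), Fm n P Q S zh.1 zh.2 * L zh.2 zh.1 :=
        Summable.tsum_comm' hΦ hΦfiber hΦcol
    _ = ∑' S : Fin (n+1) → Z, prodPMF (n+1) P S
          * ∑' h : H, Q S h * ((1 / ((n+1 : ℕ) : ℝ)) * ∑ i, L h (S i)) := tsum_congr e2

lemma summable_joint (hP : IsPMF P) (hQ : ∀ S, IsPMF (Q S)) :
    Summable (fun zh : Z × H => jointZH (n+1) P Q zh.1 zh.2) := by
  have hQ0 : ∀ S h, 0 ≤ Q S h := fun S h => (hQ S).1 h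
  have hG : Summable (fun x : (Fin (n+1) → Z) × (Z × H) => Fm n P Q x.1 x.2.1 x.2.2) := by
    have hnn : (0:(Fin (n+1) → Z) × (Z × H) → ℝ) ≤ fun x => Fm n P Q x.1 x.2.1 x.2.2 :=
      fun x => Fm_nonneg hP.1 hQ0 x.1 x.2.1 x.2.2
    refine (summable_prod_of_nonneg hnn).2 ⟨summable_Fm_prod hP hQ, ?_⟩
    have hfun : (fun S => ∑' zh : Z × H, Fm n P Q S zh.1 zh.2) = prodPMF (n+1) P :=
      funext fun S => tsum_Fm_prod hP hQ S
    rw [hfun]; exact (hasSum_prodPMF hP (n+1)).summable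
  have hGc : Summable (fun x : (Z × H) × (Fin (n+1) → Z) => Fm n P Q x.2 x.1.1 x.1.2) :=
    ((Equiv.prodComm (Z × H) (Fin (n+1) → Z)).summable_iff).mpr hG
  have hnn2 : (0:(Z × H) × (Fin (n+1) → Z) → ℝ) ≤ fun x => Fm n P Q x.2 x.1.1 x.1.2 :=
    fun x => Fm_nonneg hP.1 hQ0 x.2 x.1.1 x.1.2
  have h2 := ((summable_prod_of_nonneg hnn2).1 hGc).2
  exact h2.congr fun zh => (jointZH_eq n P Q zh.1 zh.2).symm

lemma tsum_joint (hP : IsPMF P) (hQ : ∀ S, IsPMF (Q S)) :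
    (∑' zh : Z × H, jointZH (n+1) P Q zh.1 zh.2) = 1 := by
  have h0 := master (n := n) hP hQ (L := fun _ _ => (1:ℝ))
    (fun _ _ => zero_le_one) (fun _ _ => le_refl 1)
  have e1 : ∀ zh : Z × H, jointZH (n+1) P Q zh.1 zh.2 * (1:ℝ)
      = jointZH (n+1) P Q zh.1 zh.2 := fun zh => mul_one _
  rw [tsum_congr e1] at h0
  rw [h0]
  have e2 : ∀ (S : Fin (n+1) → Z) (h : H),
      Q S h * ((1 / ((n+1 : ℕ) : ℝ)) * ∑ _i : Fin (n+1), (1:ℝ)) = Q S h := by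
    intro S h
    have hs : (∑ _i : Fin (n+1), (1:ℝ)) = ((n+1 : ℕ) : ℝ) := by simp
    rw [hs, one_div, inv_mul_cancel₀ (natcast_ne n), mul_one]
  have e3 : ∀ S : Fin (n+1) → Z, prodPMF (n+1) P S
      * (∑' h : H, Q S h * ((1 / ((n+1 : ℕ) : ℝ)) * ∑ _i : Fin (n+1), (1:ℝ)))
      = prodPMF (n+1) P S := by
    intro S
    rw [tsum_congr (e2 S), (hQ S).2.tsum_eq, mul_one]
  rw [tsum_congr e3]
  exact (hasSum_prodPMF hP (n+1)).tsum_eq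

lemma margZ_eq (hP : IsPMF P) (hQ : ∀ S, IsPMF (Q S)) (z : Z) :
    margZ (n+1) P Q z = P z := by
  have hQ0 : ∀ S h, 0 ≤ Q S h := fun S h => (hQ S).1 h
  have huncur : Summable (Function.uncurry fun (S : Fin (n+1) → Z) (h : H) =>
      Fm n P Q S z h) := by
    have hnn : (0:(Fin (n+1) → Z) × H → ℝ) ≤ fun x => Fm n P Q x.1 z x.2 :=
      fun x => Fm_nonneg hP.1 hQ0 x.1 z x.2
    refine (summable_prod_of_nonneg hnn).2
      ⟨fun S => (hasSum_Fm_h hQ S z).summable, ?_⟩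
    have hfun : (fun S => ∑' h, Fm n P Q S z h)
        = fun S => prodPMF (n+1) P S * fracZ n S z :=
      funext fun S => (hasSum_Fm_h hQ S z).tsum_eq
    rw [hfun]; exact (hasSum_margF hP z).summable
  have hcol : ∀ h, Summable (fun S => Fm n P Q S z h) :=
    fun h => Summable.of_nonneg_of_le (fun S => Fm_nonneg hP.1 hQ0 S z h)
      (fun S => Fm_le hP.1 hQ S z h) (hasSum_prodPMF hP (n+1)).summable
  calc margZ (n+1) P Q z
      = ∑' (h : H) (S : Fin (n+1) → Z), Fm n P Q S z h :=
        tsum_congr fun h => jointZH_eq n P Q z h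
    _ = ∑' (S : Fin (n+1) → Z) (h : H), Fm n P Q S z h :=
        Summable.tsum_comm' huncur (fun S => (hasSum_Fm_h hQ S z).summable) hcol
    _ = ∑' S : Fin (n+1) → Z, prodPMF (n+1) P S * fracZ n S z :=
        tsum_congr fun S => (hasSum_Fm_h hQ S z).tsum_eq
    _ = P z := (hasSum_margF hP z).tsum_eq

lemma summable_prQ (hP : IsPMF P) (hQ : ∀ S, IsPMF (Q S)) :
    Summable (fun x : (Fin (n+1) → Z) × H => prodPMF (n+1) P x.1 * Q x.1 x.2) := by
  have hnn : (0:(Fin (n+1) → Z) × H → ℝ) ≤ fun x => prodPMF (n+1) P x.1 * Q x.1 x.2 :=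
    fun x => mul_nonneg (prodPMF_nonneg hP.1 _ x.1) ((hQ x.1).1 x.2)
  refine (summable_prod_of_nonneg hnn).2 ⟨?_, ?_⟩
  · exact fun S => (hQ S).2.summable.mul_left (prodPMF (n+1) P S)
  have hfun : (fun S => ∑' h, prodPMF (n+1) P S * Q S h) = prodPMF (n+1) P := by
    funext S
    rw [((hQ S).2.mul_left (prodPMF (n+1) P S)).tsum_eq, mul_one]
  rw [hfun]; exact (hasSum_prodPMF hP (n+1)).summable

lemma margH_eq (hP : IsPMF P) (hQ : ∀ S, IsPMF (Q S)) (h : H) :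
    margH (n+1) P Q h = ∑' S, prodPMF (n+1) P S * Q S h := by
  have hQ0 : ∀ S h, 0 ≤ Q S h := fun S h => (hQ S).1 h
  have hcolsum : Summable (fun S => prodPMF (n+1) P S * Q S h) :=
    Summable.of_nonneg_of_le
      (fun S => mul_nonneg (prodPMF_nonneg hP.1 _ S) (hQ0 S h))
      (fun S => mul_le_of_le_one_right (prodPMF_nonneg hP.1 _ S) (isPMF_le_one (hQ S) h))
      (hasSum_prodPMF hP (n+1)).summable
  have huncur : Summable (Function.uncurry fun (S : Fin (n+1) → Z) (z : Z) =>
      Fm n P Q S z h) := by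
    have hnn : (0:(Fin (n+1) → Z) × Z → ℝ) ≤ fun x => Fm n P Q x.1 x.2 h :=
      fun x => Fm_nonneg hP.1 hQ0 x.1 x.2 h
    refine (summable_prod_of_nonneg hnn).2
      ⟨fun S => (hasSum_Fm_z S h).summable, ?_⟩
    have hfun : (fun S => ∑' z, Fm n P Q S z h)
        = fun S => prodPMF (n+1) P S * Q S h :=
      funext fun S => (hasSum_Fm_z S h).tsum_eq
    rw [hfun]; exact hcolsum
  have hcol : ∀ z, Summable (fun S => Fm n P Q S z h) :=
    fun z => Summable.of_nonneg_of_le (fun S => Fm_nonneg hP.1 hQ0 S z h)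
      (fun S => Fm_le hP.1 hQ S z h) (hasSum_prodPMF hP (n+1)).summable
  calc margH (n+1) P Q h
      = ∑' (z : Z) (S : Fin (n+1) → Z), Fm n P Q S z h :=
        tsum_congr fun z => jointZH_eq n P Q z h
    _ = ∑' (S : Fin (n+1) → Z) (z : Z), Fm n P Q S z h :=
        Summable.tsum_comm' huncur (fun S => (hasSum_Fm_z S h).summable) hcol
    _ = ∑' S : Fin (n+1) → Z, prodPMF (n+1) P S * Q S h :=
        tsum_congr fun S => (hasSum_Fm_z S h).tsum_eq

lemma hasSum_margH (hP : IsPMF P) (hQ : ∀ S, IsPMF (Q S)) :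
    HasSum (fun h => margH (n+1) P Q h) 1 := by
  have hQ0 : ∀ S h, 0 ≤ Q S h := fun S h => (hQ S).1 h
  have hg := summable_prQ hP hQ
  have hguncur : Summable (Function.uncurry fun (S : Fin (n+1) → Z) (h : H) =>
      prodPMF (n+1) P S * Q S h) := hg
  have hcols : ∀ h, Summable (fun S => prodPMF (n+1) P S * Q S h) :=
    fun h => Summable.of_nonneg_of_le
      (fun S => mul_nonneg (prodPMF_nonneg hP.1 _ S) (hQ0 S h))
      (fun S => mul_le_of_le_one_right (prodPMF_nonneg hP.1 _ S) (isPMF_le_one (hQ S) h))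
      (hasSum_prodPMF hP (n+1)).summable
  have hswap : (∑' (h : H) (S : Fin (n+1) → Z), prodPMF (n+1) P S * Q S h)
      = ∑' (S : Fin (n+1) → Z) (h : H), prodPMF (n+1) P S * Q S h :=
    Summable.tsum_comm' hguncur (fun S => (hQ S).2.summable.mul_left (prodPMF (n+1) P S)) hcols
  have htot : (∑' (S : Fin (n+1) → Z) (h : H), prodPMF (n+1) P S * Q S h) = 1 := by
    rw [tsum_congr fun S : Fin (n+1) → Z =>
      (((hQ S).2.mul_left (prodPMF (n+1) P S)).tsum_eq.trans (mul_one _))]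
    exact (hasSum_prodPMF hP (n+1)).tsum_eq
  have hgc : Summable (fun x : H × (Fin (n+1) → Z) =>
      prodPMF (n+1) P x.2 * Q x.2 x.1) :=
    ((Equiv.prodComm H (Fin (n+1) → Z)).summable_iff).mpr hg
  have hnn : (0:H × (Fin (n+1) → Z) → ℝ) ≤ fun x => prodPMF (n+1) P x.2 * Q x.2 x.1 :=
    fun x => mul_nonneg (prodPMF_nonneg hP.1 _ x.2) (hQ0 x.2 x.1)
  have hsum_fun : Summable (fun h => ∑' S, prodPMF (n+1) P S * Q S h) :=
    ((summable_prod_of_nonneg hnn).1 hgc).2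
  have hfin : HasSum (fun h => ∑' S, prodPMF (n+1) P S * Q S h) 1 := by
    have := hsum_fun.hasSum
    rwa [hswap.trans htot] at this
  have hfun : (fun h => margH (n+1) P Q h) = fun h => ∑' S, prodPMF (n+1) P S * Q S h :=
    funext fun h => margH_eq hP hQ h
  rw [hfun]; exact hfin

lemma margH_nonneg_strong (hP : IsPMF P) (hQ : ∀ S, IsPMF (Q S)) (h : H) :
    0 ≤ margH (n+1) P Q h := by
  rw [margH_eq hP hQ h]
  exact tsum_nonneg fun S => mul_nonneg (prodPMF_nonneg hP.1 _ S) ((hQ S).1 h)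

lemma isPMF_joint (hP : IsPMF P) (hQ : ∀ S, IsPMF (Q S)) :
    IsPMF (fun zh : Z × H => jointZH (n+1) P Q zh.1 zh.2) := by
  constructor
  · intro zh
    show 0 ≤ jointZH (n+1) P Q zh.1 zh.2
    rw [jointZH_eq]
    exact tsum_nonneg fun S => Fm_nonneg hP.1 (fun S h => (hQ S).1 h) S zh.1 zh.2
  · have := (summable_joint hP hQ).hasSum
    rwa [tsum_joint hP hQ] at this

lemma isPMF_prodMarg (hP : IsPMF P) (hQ : ∀ S, IsPMF (Q S)) :
    IsPMF (fun zh : Z × H => margZ (n+1) P Q zh.1 * margH (n+1) P Q zh.2) := by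
  have hfun : (fun zh : Z × H => margZ (n+1) P Q zh.1 * margH (n+1) P Q zh.2)
      = fun zh => P zh.1 * margH (n+1) P Q zh.2 :=
    funext fun zh => by rw [margZ_eq hP hQ]
  rw [hfun]
  constructor
  · exact fun zh => mul_nonneg (hP.1 zh.1) (margH_nonneg_strong hP hQ zh.2)
  · have hs : Summable (fun zh : Z × H => P zh.1 * margH (n+1) P Q zh.2) :=
      hP.2.summable.mul_of_nonneg (hasSum_margH hP hQ).summable hP.1
        (fun h => margH_nonneg_strong hP hQ h)
    have := hP.2.mul (hasSum_margH hP hQ) hs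
    simpa using this

lemma trueRisk_eq (hP : IsPMF P) (hQ : ∀ S, IsPMF (Q S)) {L : H → Z → ℝ}
    (hL0 : ∀ h z, 0 ≤ L h z) (hL1 : ∀ h z, L h z ≤ 1) :
    trueRisk (n+1) P Q L = ∑' zh : Z × H,
      (margZ (n+1) P Q zh.1 * margH (n+1) P Q zh.2) * L zh.2 zh.1 := by
  have hQ0 : ∀ S h, 0 ≤ Q S h := fun S h => (hQ S).1 h
  have hpr0 : ∀ S : Fin (n+1) → Z, 0 ≤ prodPMF (n+1) P S := prodPMF_nonneg hP.1 (n+1)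
  have hprS : Summable (prodPMF (n+1) P) := (hasSum_prodPMF hP (n+1)).summable
  set c : H → ℝ := fun h => ∑' z, P z * L h z with hcdef
  have hcsum : ∀ h, Summable (fun z => P z * L h z) := fun h =>
    Summable.of_nonneg_of_le (fun z => mul_nonneg (hP.1 z) (hL0 h z))
      (fun z => mul_le_of_le_one_right (hP.1 z) (hL1 h z)) hP.2.summable
  have hc0 : ∀ h, 0 ≤ c h := fun h => tsum_nonneg fun z => mul_nonneg (hP.1 z) (hL0 h z)
  have hc1 : ∀ h, c h ≤ 1 := by
    intro h
    have := Summable.tsum_le_tsum (fun z => mul_le_of_le_one_right (hP.1 z) (hL1 h z))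
      (hcsum h) hP.2.summable
    rwa [hP.2.tsum_eq] at this
  -- facts about margH
  have hm0 : ∀ h, 0 ≤ margH (n+1) P Q h := margH_nonneg_strong hP hQ
  have hmS : HasSum (fun h => margH (n+1) P Q h) 1 := hasSum_margH hP hQ
  have hm1 : ∀ h, margH (n+1) P Q h ≤ 1 := isPMF_le_one ⟨hm0, hmS⟩
  -- step A : trueRisk = ∑' h, margH h * c h
  have hprQ := summable_prQ hP hQ
  have hnn : (0:(Fin (n+1) → Z) × H → ℝ)
      ≤ fun x => prodPMF (n+1) P x.1 * Q x.1 x.2 * c x.2 :=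
    fun x => mul_nonneg (mul_nonneg (hpr0 x.1) (hQ0 x.1 x.2)) (hc0 x.2)
  have hsum2 : Summable (Function.uncurry fun (S : Fin (n+1) → Z) (h : H) =>
      prodPMF (n+1) P S * Q S h * c h) :=
    Summable.of_nonneg_of_le hnn
      (fun x => mul_le_of_le_one_right
        (mul_nonneg (hpr0 x.1) (hQ0 x.1 x.2)) (hc1 x.2)) hprQ
  have hfib : ∀ S, Summable (fun h => prodPMF (n+1) P S * Q S h * c h) :=
    fun S => Summable.of_nonneg_of_le (fun h => hnn (S, h))
      (fun h => mul_le_of_le_one_right (mul_nonneg (hpr0 S) (hQ0 S h)) (hc1 h))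
      ((hQ S).2.summable.mul_left (prodPMF (n+1) P S))
  have hcols : ∀ h, Summable (fun S => prodPMF (n+1) P S * Q S h * c h) :=
    fun h => Summable.of_nonneg_of_le (fun S => hnn (S, h))
      (fun S => (mul_le_of_le_one_right (mul_nonneg (hpr0 S) (hQ0 S h)) (hc1 h)).trans
        (mul_le_of_le_one_right (hpr0 S) (isPMF_le_one (hQ S) h))) hprS
  have stepA : trueRisk (n+1) P Q L = ∑' h : H, margH (n+1) P Q h * c h := by
    calc trueRisk (n+1) P Q L
        = ∑' S : Fin (n+1) → Z, prodPMF (n+1) P S * ∑' h : H, Q S h * c h := rfl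
      _ = ∑' (S : Fin (n+1) → Z) (h : H), prodPMF (n+1) P S * Q S h * c h := by
          refine tsum_congr fun S => ?_
          rw [← tsum_mul_left]
          exact tsum_congr fun h => (mul_assoc _ _ _).symm
      _ = ∑' (h : H) (S : Fin (n+1) → Z), prodPMF (n+1) P S * Q S h * c h :=
          (Summable.tsum_comm' hsum2 hfib hcols).symm
      _ = ∑' h : H, margH (n+1) P Q h * c h := by
          refine tsum_congr fun h => ?_
          rw [tsum_mul_right, margH_eq hP hQ h]
  -- step B : the product-marginal sum equals the same quantity
  have hmulS : ∀ z : Z, Summable (fun h => P z * margH (n+1) P Q h) :=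
    fun z => hmS.summable.mul_left (P z)
  have htnn : (0:Z × H → ℝ)
      ≤ fun zh => P zh.1 * margH (n+1) P Q zh.2 * L zh.2 zh.1 :=
    fun zh => mul_nonneg (mul_nonneg (hP.1 zh.1) (hm0 zh.2)) (hL0 _ _)
  have htfib : ∀ z, Summable (fun h => P z * margH (n+1) P Q h * L h z) :=
    fun z => Summable.of_nonneg_of_le (fun h => htnn (z, h))
      (fun h => mul_le_of_le_one_right (mul_nonneg (hP.1 z) (hm0 h)) (hL1 h z))
      (hmulS z)
  have htcols : ∀ h, Summable (fun z => P z * margH (n+1) P Q h * L h z) :=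
    fun h => Summable.of_nonneg_of_le (fun z => htnn (z, h))
      (fun z => (mul_le_of_le_one_right (mul_nonneg (hP.1 z) (hm0 h)) (hL1 h z)).trans
        (mul_le_of_le_one_right (hP.1 z) (hm1 h))) hP.2.summable
  have ht : Summable (Function.uncurry fun (z : Z) (h : H) =>
      P z * margH (n+1) P Q h * L h z) := by
    refine (summable_prod_of_nonneg htnn).2 ⟨htfib, ?_⟩
    refine Summable.of_nonneg_of_le (fun z => tsum_nonneg fun h => htnn (z, h))
      (fun z => ?_) hP.2.summable
    have hb := Summable.tsum_le_tsum (fun h =>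
      mul_le_of_le_one_right (mul_nonneg (hP.1 z) (hm0 h)) (hL1 h z)) (htfib z) (hmulS z)
    have : (∑' h, P z * margH (n+1) P Q h) = P z := by
      rw [(hmS.mul_left (P z)).tsum_eq, mul_one]
    linarith [hb, this ▸ hb]
  have stepB : (∑' zh : Z × H,
      (margZ (n+1) P Q zh.1 * margH (n+1) P Q zh.2) * L zh.2 zh.1)
      = ∑' h : H, margH (n+1) P Q h * c h := by
    have hfun : (fun zh : Z × H =>
        (margZ (n+1) P Q zh.1 * margH (n+1) P Q zh.2) * L zh.2 zh.1)
        = fun zh : Z × H => P zh.1 * margH (n+1) P Q zh.2 * L zh.2 zh.1 :=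
      funext fun zh => by rw [margZ_eq hP hQ]
    rw [hfun]
    calc (∑' zh : Z × H, P zh.1 * margH (n+1) P Q zh.2 * L zh.2 zh.1)
        = ∑' (z : Z) (h : H), P z * margH (n+1) P Q h * L h z :=
          Summable.tsum_prod' ht htfib
      _ = ∑' (h : H) (z : Z), P z * margH (n+1) P Q h * L h z :=
          (Summable.tsum_comm' ht htfib htcols).symm
      _ = ∑' h : H, margH (n+1) P Q h * c h := by
          refine tsum_congr fun h => ?_
          have : (fun z => P z * margH (n+1) P Q h * L h z)
              = fun z => margH (n+1) P Q h * (P z * L h z) := by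
            funext z; ring
          rw [this, tsum_mul_left]
  rw [stepA, stepB]

lemma key_bound (hP : IsPMF P) (hQ : ∀ S, IsPMF (Q S)) {L : H → Z → ℝ}
    (hL : ∀ h z, 0 ≤ L h z ∧ L h z ≤ 1) :
    |trueRisk (n+1) P Q L - empRisk (n+1) P Q L| ≤ affinity (n+1) P Q := by
  have hL0 : ∀ h z, 0 ≤ L h z := fun h z => (hL h z).1
  have hL1 : ∀ h z, L h z ≤ 1 := fun h z => (hL h z).2
  have hemp : empRisk (n+1) P Q L
      = ∑' zh : Z × H, jointZH (n+1) P Q zh.1 zh.2 * L zh.2 zh.1 :=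
    (master hP hQ hL0 hL1).symm
  have htrue := trueRisk_eq hP hQ hL0 hL1
  have h1 := abs_tsum_sub_le_tv
    (p := fun zh : Z × H => margZ (n+1) P Q zh.1 * margH (n+1) P Q zh.2)
    (q := fun zh : Z × H => jointZH (n+1) P Q zh.1 zh.2)
    (f := fun zh : Z × H => L zh.2 zh.1)
    (isPMF_prodMarg hP hQ) (isPMF_joint hP hQ)
    (fun zh => hL0 _ _) (fun zh => hL1 _ _)
  rw [htrue, hemp]
  exact h1

end Main

section Capacity

variable {Z H : Type*}

lemma jointZH_nonneg {m : ℕ} {P : Z → ℝ} {Q : (Fin m → Z) → H → ℝ}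
    (hP0 : ∀ z, 0 ≤ P z) (hQ0 : ∀ S h, 0 ≤ Q S h) (z : Z) (h : H) :
    0 ≤ jointZH m P Q z h := by
  letI := Classical.decEq Z
  have e : jointZH m P Q z h = ∑' S : Fin m → Z,
      prodPMF m P S * ((1 / (m : ℝ)) * ∑ i, if S i = z then (1:ℝ) else 0) * Q S h := rfl
  rw [e]
  refine tsum_nonneg fun S => mul_nonneg (mul_nonneg (prodPMF_nonneg hP0 m S)
    (mul_nonneg (by positivity) (Finset.sum_nonneg fun i _ => by split <;> norm_num)))
    (hQ0 S h)

lemma affinity_le_capacity (m : ℕ) (Q : (Fin m → Z) → H → ℝ)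
    (hQ0 : ∀ S h, 0 ≤ Q S h) {P : Z → ℝ} (hP : IsPMF P) :
    affinity m P Q ≤ capacity m Q := by
  apply le_csSup
  · refine ⟨1, fun cc hcc => ?_⟩
    obtain ⟨P', hP', rfl⟩ := hcc
    unfold affinity tv
    have h0 : 0 ≤ ∑' zh : Z × H,
        min (margZ m P' Q zh.1 * margH m P' Q zh.2) (jointZH m P' Q zh.1 zh.2) := by
      refine tsum_nonneg fun zh => le_min ?_ (jointZH_nonneg hP'.1 hQ0 zh.1 zh.2)
      exact mul_nonneg
        (tsum_nonneg fun h => jointZH_nonneg hP'.1 hQ0 zh.1 h)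
        (tsum_nonneg fun z => jointZH_nonneg hP'.1 hQ0 z zh.2)
    linarith
  · exact ⟨P, hP, rfl⟩

end Capacity

/-- Theorem 3, sufficiency: if the learning capacities satisfy
`C^(m) → 0`, then the learning machine generalizes: for every distribution `P`
of observations and every sequence of `[0,1]`-valued loss functions, the
difference between true and empirical risks tends to `0` as `m → ∞`. -/
theorem stmt11 {Z : Type*} [Countable Z] (H : ℕ → Type*) [∀ m, Countable (H m)]
    (Q : ∀ m, (Fin m → Z) → H m → ℝ)
    (hQ : ∀ m, 1 ≤ m → ∀ S, IsPMF (Q m S))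
    (hcap : Filter.Tendsto (fun m => capacity m (Q m)) Filter.atTop (nhds 0)) :
    ∀ P : Z → ℝ, IsPMF P →
      ∀ L : (m : ℕ) → H m → Z → ℝ, (∀ m h z, 0 ≤ L m h z ∧ L m h z ≤ 1) →
        Filter.Tendsto
          (fun m => |trueRisk m P (Q m) (L m) - empRisk m P (Q m) (L m)|)
          Filter.atTop (nhds 0) := by
  intro P hP L hL
  refine tendsto_of_tendsto_of_tendsto_of_le_of_le' tendsto_const_nhds hcap ?_ ?_
  · exact Filter.Eventually.of_forall fun m => abs_nonneg _
  · refine Filter.eventually_atTop.2 ⟨1, fun m hm => ?_⟩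
    obtain ⟨n, rfl⟩ : ∃ n, m = n + 1 := ⟨m - 1, by omega⟩
    exact (key_bound hP (hQ _ hm) (fun h z => hL _ h z)).trans
      (affinity_le_capacity _ _ (fun S h => (hQ _ hm S).1 h) hP)
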